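/- For j ≥ 1 let Θ_j be the 2×2 matrix with rows (−a_j, ρ_j) and (ρ̂_j, conj(a_j)). Let ℱ^{(1)} be the infinite block-diagonal matrix diag(Θ_1, Θ_3, Θ_5, …) and ℱ^{(2)} the infinite block-diagonal matrix diag(1, Θ_2, Θ_4, …) (the first block of ℱ^{(2)} being the 1×1 block (1)), and let ℱ^{(1)}_n, ℱ^{(2)}_n denote their n×n principal submatrices. Then for every n ≥ 1 the five-diagonal matrix factors as ℱ_n = ℱ^{(2)}_n · ℱ^{(1)}_n. Moreover, ℱ^{(1)}_n · conj(ℱ^{(1)}_n) = I_n whenever n is even, and ℱ^{(2)}_n · conj(ℱ^{(2)}_n) = I_n whenever n is odd, where conj denotes entrywise complex conjugation. -/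

import Mathlib

open LaurentPolynomial Polynomial Complex ComplexConjugate

noncomputable section

/-- Reversed polynomial with conjugated coefficients: p*(z) = Σ conj(c_{m-k}) z^k. -/
def revc (p : Polynomial ℂ) : Polynomial ℂ := (p.map (starRingEnd ℂ)).reverse

/-- Monic orthogonal polynomials from Schur parameters: φ_0 = 1,
φ_n = z φ_{n-1} + a_n φ*_{n-1}. -/
def phi (a : ℕ → ℂ) : ℕ → Polynomial ℂ
  | 0 => 1
  | n + 1 => X * phi a n + Polynomial.C (a (n + 1)) * revc (phi a n)

/-- ρ_n := |1 - |a_n|²|^{1/2}. -/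
def rho (a : ℕ → ℂ) (n : ℕ) : ℝ := Real.sqrt |1 - ‖a n‖ ^ 2|

/-- ε_n := sgn (1 - |a_n|²). -/
def sgn (a : ℕ → ℂ) (n : ℕ) : ℝ := Real.sign (1 - ‖a n‖ ^ 2)

/-- ρ̂_n := ε_n ρ_n. -/
def rhoh (a : ℕ → ℂ) (n : ℕ) : ℝ := sgn a n * rho a n

/-- κ_n := Π_{k=1}^n ρ_k⁻¹ (κ_0 = 1). -/
def kap (a : ℕ → ℂ) (n : ℕ) : ℝ := ∏ k ∈ Finset.Icc 1 n, (rho a k)⁻¹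

/-- e_n := Π_{k=1}^n ε_k (e_0 = 1). -/
def esgn (a : ℕ → ℂ) (n : ℕ) : ℝ := ∏ k ∈ Finset.Icc 1 n, sgn a k

/-- Orthonormal polynomials φ̂_n := κ_n φ_n. -/
def phin (a : ℕ → ℂ) (n : ℕ) : Polynomial ℂ := Polynomial.C ((kap a n : ℝ) : ℂ) * phi a n

/-- Standard right orthonormal Laurent polynomials:
χ_{2m} = z^{-m} φ̂*_{2m}, χ_{2m+1} = z^{-m} φ̂_{2m+1}. -/
def chi (a : ℕ → ℂ) (n : ℕ) : LaurentPolynomial ℂ :=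
  T (-((n / 2 : ℕ) : ℤ)) * (if Even n then revc (phin a n) else phin a n).toLaurent

/-- The kernel K_n(z,y) := Σ_{k=0}^n e_k φ̂_k(z) conj(φ̂_k(y)). -/
def Kker (a : ℕ → ℂ) (n : ℕ) (z y : ℂ) : ℂ :=
  ∑ k ∈ Finset.range (n + 1),
    ((esgn a k : ℝ) : ℂ) * (phin a k).eval z * conj ((phin a k).eval y)

/-- Entries of the five-diagonal matrix, with rows/columns indexed from 1. -/
def Fent (a : ℕ → ℂ) (i j : ℕ) : ℂ :=
  if i = 1 then
    if j = 1 then -a 1 else if j = 2 then (rho a 1 : ℂ) else 0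
  else if i % 2 = 0 then
    if j + 1 = i then -(rhoh a (i - 1) : ℂ) * a i
    else if j = i then -conj (a (i - 1)) * a i
    else if j = i + 1 then -(rho a i : ℂ) * a (i + 1)
    else if j = i + 2 then (rho a i : ℂ) * (rho a (i + 1) : ℂ)
    else 0
  else
    if j + 2 = i then (rhoh a (i - 2) : ℂ) * (rhoh a (i - 1) : ℂ)
    else if j + 1 = i then conj (a (i - 2)) * (rhoh a (i - 1) : ℂ)
    else if j = i then -conj (a (i - 1)) * a i
    else if j = i + 1 then conj (a (i - 1)) * (rho a i : ℂ)
    else 0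

/-- The n×n five-diagonal matrix ℱ_n. -/
def Fmat (a : ℕ → ℂ) (n : ℕ) : Matrix (Fin n) (Fin n) ℂ :=
  Matrix.of fun i j => Fent a (i.val + 1) (j.val + 1)

/-- Evaluation of a Laurent polynomial at a nonzero complex number. -/
def levalAt (z : ℂ) (f : LaurentPolynomial ℂ) : ℂ :=
  Finsupp.sum (AddMonoidAlgebra.coeff f) fun k c => c * z ^ k

/-- Entries (1-indexed) of the infinite block-diagonal matrix ℱ^{(1)} = diag(Θ₁, Θ₃, …),
where Θ_j has rows (−a_j, ρ_j) and (ρ̂_j, conj a_j). -/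
def F1ent (a : ℕ → ℂ) (i j : ℕ) : ℂ :=
  if i % 2 = 1 then
    if j = i then -a i else if j = i + 1 then (rho a i : ℂ) else 0
  else
    if j + 1 = i then (rhoh a (i - 1) : ℂ) else if j = i then conj (a (i - 1)) else 0

/-- Entries (1-indexed) of the infinite block-diagonal matrix ℱ^{(2)} = diag(1, Θ₂, Θ₄, …). -/
def F2ent (a : ℕ → ℂ) (i j : ℕ) : ℂ :=
  if i = 1 then (if j = 1 then 1 else 0)
  else if i % 2 = 0 then
    if j = i then -a i else if j = i + 1 then (rho a i : ℂ) else 0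
  else
    if j + 1 = i then (rhoh a (i - 1) : ℂ) else if j = i then conj (a (i - 1)) else 0

/-- n×n principal submatrix of ℱ^{(1)}. -/
def F1mat (a : ℕ → ℂ) (n : ℕ) : Matrix (Fin n) (Fin n) ℂ :=
  Matrix.of fun i j => F1ent a (i.val + 1) (j.val + 1)

/-- n×n principal submatrix of ℱ^{(2)}. -/
def F2mat (a : ℕ → ℂ) (n : ℕ) : Matrix (Fin n) (Fin n) ℂ :=
  Matrix.of fun i j => F2ent a (i.val + 1) (j.val + 1)

/-!
`ℱ^{(1)}` and `ℱ^{(2)}` are block diagonal with interleaved blocks, so row `i` of `ℱ^{(2)}`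
meets only two consecutive rows of `ℱ^{(1)}`, and no index `k > n` lies both in the
`ℱ^{(2)}`-block of some `i ≤ n` and in the `ℱ^{(1)}`-block of some `j ≤ n`: truncating to
`n × n` commutes with the product, and expanding the two-term sums gives the five-diagonal
entries. For even `n` no block of `ℱ^{(1)}` straddles `n` (for odd `n` none of `ℱ^{(2)}` does),
so `ℱ^{(r)}_n conj(ℱ^{(r)}_n)` is computed blockwise, and `Θ_j conj(Θ_j) = I` because
`ρ_j ρ̂_j = 1 - |a_j|²`.
-/

theorem Real.sign_mul_abs (r : ℝ) : Real.sign r * |r| = r := by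
  rcases lt_trichotomy r 0 with h | rfl | h
  · rw [Real.sign_of_neg h, abs_of_neg h, neg_one_mul, neg_neg]
  · rw [abs_zero, mul_zero]
  · rw [Real.sign_of_pos h, abs_of_pos h, one_mul]

theorem ofReal_rho_mul_rhoh (a : ℕ → ℂ) (m : ℕ) :
    (rho a m : ℂ) * (rhoh a m : ℂ) = 1 - a m * conj (a m) := by
  have h : rho a m * rhoh a m = 1 - ‖a m‖ ^ 2 := by
    rw [rhoh, sgn, mul_left_comm, rho, Real.mul_self_sqrt (abs_nonneg _), Real.sign_mul_abs]
  rw [Complex.mul_conj, ← Complex.sq_norm, ← Complex.ofReal_mul, h]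
  push_cast
  ring

theorem Fin.sum_univ_val_add_one_eq_add {M : Type*} [AddCommMonoid M] {n : ℕ} (p : ℕ)
    {f : ℕ → M} (hf₀ : f 0 = 0) (hf : ∀ k, k ≠ 0 → k ≠ p → k ≠ p + 1 → f k = 0)
    (hfn : ∀ k, n < k → f k = 0) :
    ∑ k : Fin n, f (k + 1) = f p + f (p + 1) := by
  have hrange : ∑ k ∈ Finset.range n, f (k + 1) = ∑ k ∈ Finset.range (n + 1), f k := by
    rw [Finset.sum_range_succ', hf₀, add_zero]
  rw [Fin.sum_univ_eq_sum_range (fun k => f (k + 1)), hrange]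
  refine Finset.sum_eq_add p (p + 1) p.succ_ne_self.symm ?_ ?_ ?_
  · intro k _ hk
    obtain rfl | hk₀ := eq_or_ne k 0
    exacts [hf₀, hf k hk₀ hk.1 hk.2]
  · exact fun h => hfn p (by simpa using h)
  · exact fun h => hfn (p + 1) (by simpa using h)

/-- The rows of `Θ_j`, placed in columns `j` and `j + 1`. -/
def thetaTop (a : ℕ → ℂ) (j k : ℕ) : ℂ :=
  if k = j then -a j else if k = j + 1 then (rho a j : ℂ) else 0

def thetaBot (a : ℕ → ℂ) (j k : ℕ) : ℂ :=
  if k = j then (rhoh a j : ℂ) else if k = j + 1 then conj (a j) else 0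

theorem thetaTop_dot_conj (a : ℕ → ℂ) (j k : ℕ) :
    -a j * conj (thetaTop a j k) + rho a j * conj (thetaBot a j k) = if j = k then 1 else 0 := by
  unfold thetaTop thetaBot
  split_ifs <;> simp only [map_neg, map_zero, Complex.conj_ofReal, Complex.conj_conj] <;>
    first | omega | ring1 | linear_combination ofReal_rho_mul_rhoh a j

theorem thetaBot_dot_conj (a : ℕ → ℂ) (j k : ℕ) :
    rhoh a j * conj (thetaTop a j k) + conj (a j) * conj (thetaBot a j k)
      = if j + 1 = k then 1 else 0 := by
  unfold thetaTop thetaBot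
  split_ifs <;> simp only [map_neg, map_zero, Complex.conj_ofReal, Complex.conj_conj] <;>
    first | omega | ring1 | linear_combination ofReal_rho_mul_rhoh a j

theorem F1ent_of_odd (a : ℕ → ℂ) {j : ℕ} (hj : j % 2 = 1) : F1ent a j = thetaTop a j := by
  ext k
  simp only [F1ent, thetaTop, hj, if_true]

theorem F1ent_two_mul_add_two (a : ℕ → ℂ) (m : ℕ) :
    F1ent a (2 * m + 2) = thetaBot a (2 * m + 1) := by
  ext k
  simp only [F1ent, thetaBot, show (2 * m + 2) % 2 ≠ 1 by omega, if_false,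
    show 2 * m + 2 - 1 = 2 * m + 1 by omega]
  split_ifs <;> first | rfl | omega

theorem F2ent_of_even (a : ℕ → ℂ) {j : ℕ} (hj : j % 2 = 0) : F2ent a j = thetaTop a j := by
  ext k
  simp only [F2ent, thetaTop, hj, show j ≠ 1 by omega, if_true, if_false]

theorem F2ent_two_mul_add_three (a : ℕ → ℂ) (m : ℕ) :
    F2ent a (2 * m + 3) = thetaBot a (2 * m + 2) := by
  ext k
  simp only [F2ent, thetaBot, show 2 * m + 3 ≠ 1 by omega, show (2 * m + 3) % 2 ≠ 0 by omega,
    if_false, show 2 * m + 3 - 1 = 2 * m + 2 by omega]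
  split_ifs <;> first | rfl | omega

theorem F2ent_one (a : ℕ → ℂ) (k : ℕ) : F2ent a 1 k = if k = 1 then 1 else 0 := by
  simp only [F2ent, if_true]

-- `(i - 1) / 2` numbers the blocks `{2b + 1, 2b + 2}` of `ℱ^{(1)}`, and `i / 2` the blocks
-- `{2b, 2b + 1}` of `ℱ^{(2)}`.
theorem F1ent_eq_zero_of_ne (a : ℕ → ℂ) {i k : ℕ} (h : (i - 1) / 2 ≠ (k - 1) / 2) :
    F1ent a i k = 0 := by
  unfold F1ent
  split_ifs <;> first | rfl | omega

theorem F2ent_eq_zero_of_ne (a : ℕ → ℂ) {i k : ℕ} (h : i / 2 ≠ k / 2) :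
    F2ent a i k = 0 := by
  unfold F2ent
  split_ifs <;> first | rfl | omega

theorem F1ent_zero_right (a : ℕ → ℂ) {i : ℕ} (hi : i ≠ 0) : F1ent a i 0 = 0 := by
  unfold F1ent
  split_ifs <;> first | rfl | omega | contradiction

theorem F2ent_zero_right (a : ℕ → ℂ) {i : ℕ} (hi : i ≠ 0) : F2ent a i 0 = 0 := by
  unfold F2ent
  split_ifs <;> first | rfl | omega | contradiction

theorem Fent_one (a : ℕ → ℂ) : Fent a 1 = thetaTop a 1 := by
  ext k
  simp only [Fent, thetaTop, if_true]

theorem Fent_two_mul_add_two (a : ℕ → ℂ) (m k : ℕ) :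
    Fent a (2 * m + 2) k
      = -a (2 * m + 2) * thetaBot a (2 * m + 1) k
        + rho a (2 * m + 2) * thetaTop a (2 * m + 3) k := by
  simp only [Fent, thetaTop, thetaBot, show 2 * m + 2 ≠ 1 by omega,
    show (2 * m + 2) % 2 = 0 by omega, if_true, if_false, show 2 * m + 2 - 1 = 2 * m + 1 by omega]
  split_ifs <;> first | omega | ring

theorem Fent_two_mul_add_three (a : ℕ → ℂ) (m k : ℕ) :
    Fent a (2 * m + 3) k
      = rhoh a (2 * m + 2) * thetaBot a (2 * m + 1) k
        + conj (a (2 * m + 2)) * thetaTop a (2 * m + 3) k := by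
  simp only [Fent, thetaTop, thetaBot, show 2 * m + 3 ≠ 1 by omega,
    show (2 * m + 3) % 2 ≠ 0 by omega, if_false, show 2 * m + 3 - 1 = 2 * m + 2 by omega,
    show 2 * m + 3 - 2 = 2 * m + 1 by omega]
  split_ifs <;> first | omega | ring

theorem F2ent_mul_F1ent_block_sum (a : ℕ → ℂ) {i p : ℕ} (hi : i ≠ 0) (hp : p = 2 * (i / 2))
    (k : ℕ) :
    F2ent a i p * F1ent a p k + F2ent a i (p + 1) * F1ent a (p + 1) k = Fent a i k := by
  obtain ⟨m, rfl | rfl | rfl⟩ : ∃ m, i = 1 ∨ i = 2 * m + 2 ∨ i = 2 * m + 3 :=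
    ⟨(i - 2) / 2, by omega⟩
  · obtain rfl : p = 0 := hp
    rw [F2ent_one, F2ent_one, F1ent_of_odd a (j := 1) rfl, Fent_one]
    simp
  · obtain rfl : p = 2 * m + 2 := by omega
    rw [F2ent_of_even a (j := 2 * m + 2) (by omega), F1ent_two_mul_add_two,
      F1ent_of_odd a (j := 2 * m + 3) (by omega), Fent_two_mul_add_two]
    simp [thetaTop]
  · obtain rfl : p = 2 * m + 2 := by omega
    rw [F2ent_two_mul_add_three, F1ent_two_mul_add_two,
      F1ent_of_odd a (j := 2 * m + 3) (by omega), Fent_two_mul_add_three]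
    simp [thetaBot]

theorem F1ent_mul_conj_block_sum (a : ℕ → ℂ) {i p : ℕ} (hi : i ≠ 0)
    (hp : p = 2 * ((i - 1) / 2) + 1) (k : ℕ) :
    F1ent a i p * conj (F1ent a p k) + F1ent a i (p + 1) * conj (F1ent a (p + 1) k)
      = if i = k then 1 else 0 := by
  obtain ⟨m, rfl | rfl⟩ : ∃ m, i = 2 * m + 1 ∨ i = 2 * m + 2 := ⟨(i - 1) / 2, by omega⟩
  · obtain rfl : p = 2 * m + 1 := by omega
    rw [F1ent_of_odd a (j := 2 * m + 1) (by omega), F1ent_two_mul_add_two]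
    simpa [thetaTop] using thetaTop_dot_conj a (2 * m + 1) k
  · obtain rfl : p = 2 * m + 1 := by omega
    rw [F1ent_of_odd a (j := 2 * m + 1) (by omega), F1ent_two_mul_add_two]
    simpa [thetaBot] using thetaBot_dot_conj a (2 * m + 1) k

theorem F2ent_mul_conj_block_sum (a : ℕ → ℂ) {i p : ℕ} (hi : i ≠ 0) (hp : p = 2 * (i / 2))
    (k : ℕ) :
    F2ent a i p * conj (F2ent a p k) + F2ent a i (p + 1) * conj (F2ent a (p + 1) k)
      = if i = k then 1 else 0 := by
  obtain ⟨m, rfl | rfl | rfl⟩ : ∃ m, i = 1 ∨ i = 2 * m + 2 ∨ i = 2 * m + 3 :=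
    ⟨(i - 2) / 2, by omega⟩
  · obtain rfl : p = 0 := hp
    rw [F2ent_one, F2ent_one, F2ent_one]
    obtain rfl | hk := eq_or_ne k 1
    · simp
    · simp [hk, hk.symm]
  · obtain rfl : p = 2 * m + 2 := by omega
    rw [F2ent_of_even a (j := 2 * m + 2) (by omega), F2ent_two_mul_add_three]
    simpa [thetaTop] using thetaTop_dot_conj a (2 * m + 2) k
  · obtain rfl : p = 2 * m + 2 := by omega
    rw [F2ent_two_mul_add_three, F2ent_of_even a (j := 2 * m + 2) (by omega)]
    simpa [thetaBot] using thetaBot_dot_conj a (2 * m + 2) k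

theorem F2mat_mul_F1mat (a : ℕ → ℂ) (n : ℕ) : F2mat a n * F1mat a n = Fmat a n := by
  ext i j
  simp only [Matrix.mul_apply, F2mat, F1mat, Fmat, Matrix.of_apply]
  refine (Fin.sum_univ_val_add_one_eq_add
    (f := fun k => F2ent a (i + 1) k * F1ent a k (j + 1))
    (2 * ((i + 1) / 2)) ?_ ?_ ?_).trans (F2ent_mul_F1ent_block_sum a (i : ℕ).succ_ne_zero rfl _)
  · rw [F2ent_zero_right a (i : ℕ).succ_ne_zero, zero_mul]
  · intro k _ hk hk'
    rw [F2ent_eq_zero_of_ne a (by omega), zero_mul]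
  · intro k hk
    by_cases h : (i + 1) / 2 = k / 2
    · rw [F1ent_eq_zero_of_ne a (by omega), mul_zero]
    · rw [F2ent_eq_zero_of_ne a h, zero_mul]

theorem F1mat_mul_map_conj {a : ℕ → ℂ} {n : ℕ} (hn : Even n) :
    F1mat a n * (F1mat a n).map (starRingEnd ℂ) = 1 := by
  ext i j
  simp only [Matrix.mul_apply, F1mat, Matrix.map_apply, Matrix.of_apply, Matrix.one_apply]
  refine (Fin.sum_univ_val_add_one_eq_add
    (f := fun k => F1ent a (i + 1) k * conj (F1ent a k (j + 1)))
    (2 * (i / 2) + 1) ?_ ?_ ?_).trans ?_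
  · rw [F1ent_zero_right a (i : ℕ).succ_ne_zero, zero_mul]
  · intro k hk₀ hk hk'
    rw [F1ent_eq_zero_of_ne a (by omega), zero_mul]
  · intro k hk
    rw [F1ent_eq_zero_of_ne a (by obtain ⟨r, rfl⟩ := hn; omega), zero_mul]
  · rw [F1ent_mul_conj_block_sum a (i : ℕ).succ_ne_zero (by omega)]
    simp [Fin.ext_iff]

theorem F2mat_mul_map_conj {a : ℕ → ℂ} {n : ℕ} (hn : Odd n) :
    F2mat a n * (F2mat a n).map (starRingEnd ℂ) = 1 := by
  ext i j
  simp only [Matrix.mul_apply, F2mat, Matrix.map_apply, Matrix.of_apply, Matrix.one_apply]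
  refine (Fin.sum_univ_val_add_one_eq_add
    (f := fun k => F2ent a (i + 1) k * conj (F2ent a k (j + 1)))
    (2 * ((i + 1) / 2)) ?_ ?_ ?_).trans ?_
  · rw [F2ent_zero_right a (i : ℕ).succ_ne_zero, zero_mul]
  · intro k _ hk hk'
    rw [F2ent_eq_zero_of_ne a (by omega), zero_mul]
  · intro k hk
    rw [F2ent_eq_zero_of_ne a (by obtain ⟨r, rfl⟩ := hn; omega), zero_mul]
  · rw [F2ent_mul_conj_block_sum a (i : ℕ).succ_ne_zero rfl]
    simp [Fin.ext_iff]

theorem Fmat_factorization_general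
    (a : ℕ → ℂ)
    (n : ℕ) :
    Fmat a n = F2mat a n * F1mat a n ∧
    (Even n → F1mat a n * (F1mat a n).map (starRingEnd ℂ) = 1) ∧
    (Odd n → F2mat a n * (F2mat a n).map (starRingEnd ℂ) = 1) :=
  ⟨(F2mat_mul_F1mat a n).symm, F1mat_mul_map_conj, F2mat_mul_map_conj⟩

/-- the five-diagonal matrix factors as ℱ_n = ℱ^{(2)}_n ℱ^{(1)}_n; moreover
ℱ^{(1)}_n conj(ℱ^{(1)}_n) = I_n for even n and ℱ^{(2)}_n conj(ℱ^{(2)}_n) = I_n for odd n. -/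
theorem Fmat_factorization
    (a : ℕ → ℂ) (ha : ∀ n, 1 ≤ n → ‖a n‖ ≠ 1)
    (n : ℕ) (hn : 1 ≤ n) :
    Fmat a n = F2mat a n * F1mat a n ∧
    (Even n → F1mat a n * (F1mat a n).map (starRingEnd ℂ) = 1) ∧
    (Odd n → F2mat a n * (F2mat a n).map (starRingEnd ℂ) = 1) :=
  Fmat_factorization_general a n
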